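/- Let H be a connected simple graph on a finite vertex set V with |V| ≥ 2, and let Δ ≥ 1 be the maximum degree of H. Let γ(H) denote the minimum cardinality of a dominating set of H. Then there exists a connected dominating set D of H with |D| ≤ 2·(1 + H(Δ))·γ(H), where H(k) = ∑_{i=1}^{k} 1/i is the harmonic number. -/

import Mathlib

/-
Start from a dominating set `D₀` and grow a connected set `C`, one vertex of `D₀` at a time.
As long as `D₀ ⊄ C`, some `t ∈ D₀ \ C` lies within distance `3` of `C`: on a shortest path from
`C` to `D₀ \ C` of length `≥ 4`, the vertex two steps in is dominated by some `d ∈ D₀`, and `d`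
gives a shorter such path whether or not it lies in `C`. Adding a shortest path to `t` costs at
most three vertices, so the final connected set has at most `3|D₀| - 2` vertices, and
`3 ≤ 2 (1 + H(Δ))` once `Δ ≥ 1`.
-/

namespace SimpleGraph

variable {V : Type*} {G : SimpleGraph V}

def Dominates (G : SimpleGraph V) (D : Set V) : Prop :=
  ∀ v, v ∈ D ∨ ∃ u ∈ D, G.Adj u v

namespace Dominates

variable {D : Set V}

theorem mono {D' : Set V} (hD : G.Dominates D) (hDD' : D ⊆ D') : G.Dominates D' := fun v =>
  (hD v).imp (fun hv => hDD' hv) fun ⟨u, hu, huv⟩ => ⟨u, hDD' hu, huv⟩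

theorem nonempty [Nonempty V] (hD : G.Dominates D) : D.Nonempty := by
  obtain ⟨v⟩ := ‹Nonempty V›
  rcases hD v with hv | ⟨u, hu, -⟩
  exacts [⟨v, hv⟩, ⟨u, hu⟩]

theorem exists_dist_le_one (hD : G.Dominates D) (v : V) : ∃ u ∈ D, G.dist u v ≤ 1 := by
  rcases hD v with hv | ⟨u, hu, huv⟩
  · exact ⟨v, hv, by simp⟩
  · exact ⟨u, hu, by simpa using dist_le huv.toWalk⟩

theorem exists_dist_le_three [DecidableEq V] (hG : G.Connected) {D C : Finset V}
    (hD : G.Dominates D) (hC : C.Nonempty) (hDC : ¬D ⊆ C) :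
    ∃ c ∈ C, ∃ t ∈ D \ C, G.dist c t ≤ 3 := by
  obtain ⟨t₀, ht₀⟩ := Finset.not_subset.mp hDC
  obtain ⟨⟨s, t⟩, hst, hmin⟩ := (C ×ˢ (D \ C)).exists_min_image (fun p => G.dist p.1 p.2)
    ⟨(hC.choose, t₀), Finset.mem_product.mpr ⟨hC.choose_spec, Finset.mem_sdiff.mpr ht₀⟩⟩
  obtain ⟨hs, ht⟩ := Finset.mem_product.mp hst
  refine ⟨s, hs, t, ht, not_lt.mp fun hfar => ?_⟩
  obtain ⟨p, hp⟩ := hG.exists_walk_length_eq_dist s t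
  rcases p with _ | @⟨_, a, _, hsa, _ | @⟨_, b, _, hab, q⟩⟩
  · simp at hfar
  · simp only [Walk.length_cons, Walk.length_nil] at hp
    omega
  have hsb : G.dist s b ≤ 2 := by simpa using dist_le (hsa.toWalk.concat hab)
  have hbt : G.dist b t + 2 ≤ G.dist s t := by simpa [← hp] using dist_le q
  obtain ⟨d, hd, hdb⟩ := hD.exists_dist_le_one b
  by_cases hdC : d ∈ C
  · have hdt : G.dist s t ≤ G.dist d t := hmin (d, t) (Finset.mem_product.mpr ⟨hdC, ht⟩)
    have := hG.dist_triangle (u := d) (v := b) (w := t)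
    omega
  · have hsd : G.dist s t ≤ G.dist s d :=
      hmin (s, d) (Finset.mem_product.mpr ⟨hs, Finset.mem_sdiff.mpr ⟨hd, hdC⟩⟩)
    have := hG.dist_triangle (u := s) (v := b) (w := d)
    rw [dist_comm (u := b)] at this
    omega

end Dominates

theorem Walk.card_union_toFinset_support_le [DecidableEq V] (C : Finset V) {u v : V}
    (p : G.Walk u v) (hu : u ∈ C) : (C ∪ p.support.toFinset).card ≤ C.card + p.length := by
  have hsub : p.support.toFinset \ C ⊆ p.support.toFinset.erase u := fun x hx => by
    obtain ⟨hxp, hxC⟩ := Finset.mem_sdiff.mp hx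
    exact Finset.mem_erase.mpr ⟨fun h => hxC (h ▸ hu), hxp⟩
  have hsupp : p.support.toFinset.card ≤ p.length + 1 :=
    p.length_support ▸ List.toFinset_card_le _
  have := Finset.card_le_card hsub
  rw [Finset.card_erase_of_mem (by simp)] at this
  rw [Finset.union_comm, ← Finset.card_sdiff_add_card]
  omega

theorem Connected.induce_union_toFinset_support [DecidableEq V] {C : Finset V}
    (hC : (G.induce (C : Set V)).Connected) {u v : V} (p : G.Walk u v) (hu : u ∈ C) :
    (G.induce ((C ∪ p.support.toFinset : Finset V) : Set V)).Connected := by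
  have hp := p.connected_induce_support
  rw [Finset.coe_union, List.coe_toFinset]
  exact induce_union_connected hC.preconnected hp.preconnected ⟨u, hu, p.start_mem_support⟩

variable [DecidableEq V] {D : Finset V}

theorem Dominates.exists_connected_superset_of_connected (hG : G.Connected)
    (hD : G.Dominates D) (C : Finset V) (hC : (G.induce (C : Set V)).Connected)
    (hcard : C.card + 2 ≤ 3 * (C ∩ D).card) :
    ∃ C' : Finset V, D ⊆ C' ∧ (G.induce (C' : Set V)).Connected ∧
      C'.card + 2 ≤ 3 * D.card := by
  by_cases hDC : D ⊆ C
  · exact ⟨C, hDC, hC, Finset.inter_eq_right.mpr hDC ▸ hcard⟩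
  have hCne : C.Nonempty := Finset.coe_nonempty.mp (Set.nonempty_coe_sort.mp hC.nonempty)
  obtain ⟨c, hc, t, ht, hct⟩ := hD.exists_dist_le_three hG hCne hDC
  obtain ⟨p, hp⟩ := hG.exists_walk_length_eq_dist c t
  obtain ⟨htD, htC⟩ := Finset.mem_sdiff.mp ht
  set C₁ := C ∪ p.support.toFinset
  have htC₁ : t ∈ C₁ := Finset.mem_union_right _ (by simp)
  have hcard₁ : C₁.card + 2 ≤ 3 * (C₁ ∩ D).card := by
    have hgrow : insert t (C ∩ D) ⊆ C₁ ∩ D :=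
      Finset.insert_subset (Finset.mem_inter.mpr ⟨htC₁, htD⟩)
        (Finset.inter_subset_inter_right Finset.subset_union_left)
    have := Finset.card_le_card hgrow
    rw [Finset.card_insert_of_notMem fun h => htC (Finset.mem_inter.mp h).1] at this
    have : C₁.card ≤ C.card + p.length := p.card_union_toFinset_support_le C hc
    omega
  have hdecr : (D \ C₁).card < (D \ C).card :=
    Finset.card_lt_card <| Finset.ssubset_iff_of_subset
      (Finset.sdiff_subset_sdiff le_rfl Finset.subset_union_left) |>.mpr
      ⟨t, ht, fun h => (Finset.mem_sdiff.mp h).2 htC₁⟩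
  exact hD.exists_connected_superset_of_connected hG C₁
    (hC.induce_union_toFinset_support p hc) hcard₁
termination_by (D \ C).card

theorem Dominates.exists_connected_dominating_card_le (hG : G.Connected) (hD : G.Dominates D) :
    ∃ C : Finset V, G.Dominates C ∧ (G.induce (C : Set V)).Connected ∧
      C.card + 2 ≤ 3 * D.card := by
  have := hG.nonempty
  obtain ⟨d, hd⟩ := Finset.coe_nonempty.mp hD.nonempty
  have hsingle : (G.induce (({d} : Finset V) : Set V)).Connected := by
    rw [Finset.coe_singleton]
    exact ⟨Preconnected.of_subsingleton⟩
  obtain ⟨C, hDC, hC, hcard⟩ := hD.exists_connected_superset_of_connected hG {d} hsingle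
    (by simp [Finset.singleton_inter_of_mem hd])
  exact ⟨C, hD.mono hDC, hC, hcard⟩

end SimpleGraph

theorem one_le_harmonic {n : ℕ} (hn : n ≠ 0) : 1 ≤ harmonic n := by
  simpa [harmonic] using Finset.single_le_sum (f := fun i : ℕ => ((i + 1 : ℕ) : ℚ)⁻¹)
    (fun i _ => by positivity) (Finset.mem_range.mpr (Nat.pos_of_ne_zero hn))

theorem connected_dominating_set_ratio_general
    {V : Type*} (H : SimpleGraph V)
    (hconn : H.Connected)
    (Δ : ℕ) (hΔpos : 1 ≤ Δ)
    (D₀ : Finset V) (hD₀dom : ∀ v : V, v ∈ D₀ ∨ ∃ u ∈ D₀, H.Adj u v) :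
    ∃ D : Finset V, (∀ v : V, v ∈ D ∨ ∃ u ∈ D, H.Adj u v) ∧
      (H.induce (D : Set V)).Connected ∧
      (D.card : ℚ) ≤ 2 * (1 + harmonic Δ) * (D₀.card : ℚ) := by
  classical
  obtain ⟨D, hdom, hD, hcard⟩ :=
    SimpleGraph.Dominates.exists_connected_dominating_card_le (D := D₀) hconn hD₀dom
  refine ⟨D, hdom, hD, ?_⟩
  have hH : 1 ≤ harmonic Δ := one_le_harmonic (by omega)
  calc (D.card : ℚ) ≤ 3 * D₀.card := by exact_mod_cast (by omega : D.card ≤ 3 * D₀.card)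
    _ ≤ 2 * (1 + harmonic Δ) * D₀.card := by gcongr; linarith

/-- Let `H` be a connected simple graph on a finite vertex set `V` with
`|V| ≥ 2`, and let `Δ ≥ 1` be the maximum degree of `H`. Let `γ(H)` be the minimum
cardinality of a dominating set of `H`. Then there exists a connected dominating set `D` of
`H` with `|D| ≤ 2 · (1 + H(Δ)) · γ(H)`, where `H(k)` is the `k`-th harmonic number. -/
theorem connected_dominating_set_ratio
    {V : Type*} [Fintype V] [DecidableEq V] (H : SimpleGraph V) [DecidableRel H.Adj]
    (hconn : H.Connected) (hcard : 2 ≤ Fintype.card V)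
    (Δ : ℕ) (hΔ : Δ = H.maxDegree) (hΔpos : 1 ≤ Δ)
    (D₀ : Finset V) (hD₀dom : ∀ v : V, v ∈ D₀ ∨ ∃ u ∈ D₀, H.Adj u v)
    (hD₀min : ∀ D' : Finset V, (∀ v : V, v ∈ D' ∨ ∃ u ∈ D', H.Adj u v) →
        D₀.card ≤ D'.card) :
    ∃ D : Finset V, (∀ v : V, v ∈ D ∨ ∃ u ∈ D, H.Adj u v) ∧
      (H.induce (D : Set V)).Connected ∧
      (D.card : ℚ) ≤ 2 * (1 + harmonic Δ) * (D₀.card : ℚ) :=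
  connected_dominating_set_ratio_general H hconn Δ hΔpos D₀ hD₀dom
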